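/- Let X ∈ ℝ^{m×p}, U ∈ ℝ^{m×m} orthogonal, Λ diagonal with diagonal entries λ_1,…,λ_m, XXᵀ = UΛUᵀ, S ⊆ {1,…,m}, U_S the submatrix of columns of U indexed by S, and Δ = U_S U_Sᵀ. Then for any W, W_q ∈ ℝ^{n×m}, the projected quantization error obeys the bound ‖(W − W_q)ΔX‖_F² ≤ ‖W − W_q‖_F² · Σ_{i∈S} λ_i. Hence if the eigenvalues indexed by S are sufficiently small, ‖(W − W_q)ΔX‖_F ≈ 0. -/

import Mathlib

/-!
Write `E = W - W_q`. Since `Δ = U_S U_Sᵀ`, we have `E Δ X = (E U_S)(U_Sᵀ X)`, and the Frobenius norm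
is submultiplicative. The columns of `E U_S` are among those of `E U`, whose Frobenius norm is
`‖E‖_F` because `U` is orthogonal. The rows of `Uᵀ X` have Gram matrix `Uᵀ X Xᵀ U = Λ`, so the rows
of `U_Sᵀ X` have squared norms `λ_i` for `i ∈ S`, giving `‖U_Sᵀ X‖_F² = ∑_{i∈S} λ_i`.
-/

open Matrix

attribute [local instance] Matrix.frobeniusNormedAddCommGroup

namespace Matrix

variable {m n o : Type*} [Fintype n]

theorem sum_sq_eq_mul_transpose_apply (A : Matrix m n ℝ) (i : m) :
    ∑ j, A i j ^ 2 = (A * Aᵀ) i i := by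
  simp only [mul_apply, transpose_apply, sq]

theorem frobenius_norm_sq_eq_sum_sq [Fintype m] (A : Matrix m n ℝ) :
    ‖A‖ ^ 2 = ∑ i, ∑ j, A i j ^ 2 := by
  rw [frobenius_norm_def, ← Real.rpow_natCast, ← Real.rpow_mul (by positivity)]
  norm_num [Real.norm_eq_abs]

theorem frobenius_norm_sq_submatrix_rows (A : Matrix m n ℝ) (S : Finset m) :
    ‖A.submatrix ((↑) : S → m) id‖ ^ 2 = ∑ i ∈ S, ∑ j, A i j ^ 2 := by
  rw [frobenius_norm_sq_eq_sum_sq, ← Finset.sum_coe_sort S]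
  rfl

theorem frobenius_norm_submatrix_cols_le [Fintype m] (A : Matrix m n ℝ) (S : Finset n) :
    ‖A.submatrix id ((↑) : S → n)‖ ≤ ‖A‖ := by
  rw [← frobenius_norm_transpose A, ← frobenius_norm_transpose, transpose_submatrix]
  refine pow_le_pow_iff_left₀ (norm_nonneg _) (norm_nonneg _) two_ne_zero |>.mp ?_
  rw [frobenius_norm_sq_submatrix_rows, frobenius_norm_sq_eq_sum_sq]
  exact Finset.sum_le_univ_sum_of_nonneg fun i => by positivity

theorem frobenius_norm_mul_of_mul_transpose_eq_one [Fintype m] [DecidableEq n] {U : Matrix n n ℝ}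
    (hU : U * Uᵀ = 1) (A : Matrix m n ℝ) : ‖A * U‖ = ‖A‖ := by
  refine (pow_left_inj₀ (norm_nonneg _) (norm_nonneg _) two_ne_zero).mp ?_
  have h : A * U * (A * U)ᵀ = A * Aᵀ := by
    rw [transpose_mul, Matrix.mul_assoc, ← Matrix.mul_assoc U, hU, Matrix.one_mul]
  simp only [frobenius_norm_sq_eq_sum_sq, sum_sq_eq_mul_transpose_apply, h]

theorem transpose_mul_mul_transpose_eq_diagonal [Fintype m] [Fintype o] [DecidableEq m]
    {X : Matrix m o ℝ} {U : Matrix m m ℝ} {l : m → ℝ} (hU : Uᵀ * U = 1)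
    (hX : X * Xᵀ = U * diagonal l * Uᵀ) :
    Uᵀ * X * (Uᵀ * X)ᵀ = diagonal l := by
  calc Uᵀ * X * (Uᵀ * X)ᵀ = Uᵀ * (X * Xᵀ) * U := by
        simp only [transpose_mul, transpose_transpose, Matrix.mul_assoc]
    _ = (Uᵀ * U) * diagonal l * (Uᵀ * U) := by simp only [hX, Matrix.mul_assoc]
    _ = diagonal l := by rw [hU, Matrix.one_mul, Matrix.mul_one]

end Matrix

/-- With `U` orthogonal, `Λ = diagonal l`, `X * Xᵀ = U * Λ * Uᵀ`,
`S` an arbitrary index set, `U_S` the submatrix of the columns of `U` indexed by `S`, and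
`Δ = U_S * U_Sᵀ`, the projected quantization error obeys
`‖(W − W_q) Δ X‖_F² ≤ ‖W − W_q‖_F² · ∑_{i∈S} λ_i` for any `W, W_q`. -/
theorem projected_quant_error_bound
    (n m p : ℕ) (X : Matrix (Fin m) (Fin p) ℝ) (U : Matrix (Fin m) (Fin m) ℝ)
    (l : Fin m → ℝ)
    (hU : Uᵀ * U = 1)
    (hX : X * Xᵀ = U * Matrix.diagonal l * Uᵀ)
    (S : Finset (Fin m))
    (US : Matrix (Fin m) {i : Fin m // i ∈ S} ℝ)
    (hUS : ∀ (j : Fin m) (s : {i : Fin m // i ∈ S}), US j s = U j s.val)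
    (Δ : Matrix (Fin m) (Fin m) ℝ) (hΔ : Δ = US * USᵀ)
    (W Wq : Matrix (Fin n) (Fin m) ℝ) :
    ∑ i, ∑ j, (((W - Wq) * Δ * X) i j) ^ 2 ≤
      (∑ i, ∑ j, ((W - Wq) i j) ^ 2) * ∑ i ∈ S, l i := by
  set E := W - Wq
  have hUS' : US = U.submatrix id (↑) := Matrix.ext hUS
  have hfactor : E * Δ * X =
      (E * U).submatrix id ((↑) : S → Fin m) * (Uᵀ * X).submatrix (↑) id := by
    rw [submatrix_mul _ _ id id _ Function.bijective_id,
      submatrix_mul _ _ _ id id Function.bijective_id, hΔ, hUS', transpose_submatrix]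
    simp only [submatrix_id_id, Matrix.mul_assoc]
    exact (Matrix.mul_assoc _ _ _).symm
  have hrows : ‖(Uᵀ * X).submatrix ((↑) : S → Fin m) id‖ ^ 2 = ∑ i ∈ S, l i := by
    simp only [frobenius_norm_sq_submatrix_rows, sum_sq_eq_mul_transpose_apply,
      transpose_mul_mul_transpose_eq_diagonal hU hX, diagonal_apply_eq]
  have hcols : ‖(E * U).submatrix id ((↑) : S → Fin m)‖ ≤ ‖E‖ :=
    (frobenius_norm_submatrix_cols_le _ S).trans_eq
      (frobenius_norm_mul_of_mul_transpose_eq_one (mul_eq_one_comm.mp hU) E)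
  rw [← frobenius_norm_sq_eq_sum_sq, ← frobenius_norm_sq_eq_sum_sq, hfactor, ← hrows, ← mul_pow]
  gcongr
  exact (frobenius_norm_mul _ _).trans (by gcongr)
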